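/- Let K ∈ ℕ, let λ₀, …, λ_K be nonnegative reals with W := Σ_{m=0}^K λ_m > 0, let x₀, …, x_K and c be real numbers, let η ∈ (0, 1) and δ ∈ (0, 1/2). Suppose that Re( e^{−ic} · (1/W) Σ_{m=0}^K λ_m e^{i x_m} ) ≥ 1 − η, that x₀ = 0, and that λ₀ > (π²/2) · W · η^{1−2δ}. Then d(c) < η^δ. -/

import Mathlib

/-!
Only the reference term `m = 0` matters: since `cos ≤ 1`, the hypothesis bounds the weighted
deficit `∑ λ_m (1 - cos (x_m - c))` by `W η`, and its `m = 0` summand is `λ₀ (1 - cos c)`.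
Jordan's inequality `1 - cos y ≥ 2 y² / π²` on `[-π, π]` then gives
`λ₀ d(c)² ≤ (π² / 2) W η = (π² / 2) W η^(1 - 2δ) · η^(2δ) < λ₀ η^(2δ)`.
-/

/-- The distance from a real number to the set `2πℤ`. -/
noncomputable def distToTwoPiZ (y : ℝ) : ℝ := ⨅ j : ℤ, |y - 2 * Real.pi * j|

open Real

lemma distToTwoPiZ_nonneg (y : ℝ) : 0 ≤ distToTwoPiZ y :=
  Real.iInf_nonneg fun _ => abs_nonneg _

lemma distToTwoPiZ_le (y : ℝ) (j : ℤ) : distToTwoPiZ y ≤ |y - 2 * π * j| :=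
  ciInf_le ⟨0, by rintro _ ⟨k, rfl⟩; exact abs_nonneg _⟩ j

lemma sq_distToTwoPiZ_le (y : ℝ) : distToTwoPiZ y ^ 2 ≤ π ^ 2 / 2 * (1 - cos y) := by
  set r := (y : Angle).toReal
  obtain ⟨j, hj⟩ := Angle.angle_eq_iff_two_pi_dvd_sub.mp (Angle.coe_toReal (y : Angle)).symm
  have hcos : cos r = cos y := by rw [Angle.cos_toReal, Angle.cos_coe]
  have hdist : distToTwoPiZ y ^ 2 ≤ r ^ 2 := by
    rw [← sq_abs r, show r = y - 2 * π * j by linarith]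
    exact pow_le_pow_left₀ (distToTwoPiZ_nonneg y) (distToTwoPiZ_le y j) 2
  have hjordan := cos_le_one_sub_mul_cos_sq (Angle.abs_toReal_le_pi (y : Angle))
  rw [hcos] at hjordan
  have hπ : 0 < π ^ 2 := by positivity
  calc distToTwoPiZ y ^ 2 ≤ r ^ 2 := hdist
    _ = π ^ 2 / 2 * (2 / π ^ 2 * r ^ 2) := by field_simp
    _ ≤ π ^ 2 / 2 * (1 - cos y) := by gcongr; linarith

lemma re_exp_neg_mul_ofReal_mul_sum {ι : Type*} (s : Finset ι) (lam x : ι → ℝ) (a c : ℝ) :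
    (Complex.exp (-Complex.I * c) *
        ((a : ℂ) * ∑ m ∈ s, (lam m : ℂ) * Complex.exp (Complex.I * x m))).re =
      a * ∑ m ∈ s, lam m * cos (x m - c) := by
  rw [mul_left_comm, Complex.re_ofReal_mul, Finset.mul_sum, Complex.re_sum]
  refine congrArg _ (Finset.sum_congr rfl fun m _ => ?_)
  rw [mul_left_comm, ← Complex.exp_add, Complex.re_ofReal_mul,
    show -Complex.I * c + Complex.I * x m = ((x m - c : ℝ) : ℂ) * Complex.I by push_cast; ring,
    Complex.exp_ofReal_mul_I_re]

lemma sum_mul_one_sub_cos_le {ι : Type*} [Fintype ι] (lam x : ι → ℝ) (c η W : ℝ)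
    (hW : W = ∑ m, lam m) (hWpos : 0 < W)
    (h : 1 - η ≤ (Complex.exp (-Complex.I * c) *
      ((1 / W : ℝ) * ∑ m, (lam m : ℂ) * Complex.exp (Complex.I * x m))).re) :
    ∑ m, lam m * (1 - cos (x m - c)) ≤ W * η := by
  rw [re_exp_neg_mul_ofReal_mul_sum, one_div, inv_mul_eq_div, le_div_iff₀ hWpos] at h
  simp only [mul_sub, mul_one, Finset.sum_sub_distrib, ← hW]
  linarith

theorem reference_weight_forces_small_offset_general
    (K : ℕ) (lam : Fin (K + 1) → ℝ) (hlam : ∀ m, 0 ≤ lam m)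
    (W : ℝ) (hW : W = ∑ m, lam m) (hWpos : 0 < W)
    (x : Fin (K + 1) → ℝ) (c : ℝ) (η δ : ℝ)
    (hη : η ∈ Set.Ioo (0 : ℝ) 1)
    (h : 1 - η ≤
      (Complex.exp (-Complex.I * (c : ℂ)) *
        ((1 / W : ℝ) * ∑ m, (lam m : ℂ) * Complex.exp (Complex.I * (x m : ℂ)))).re)
    (hx0 : x 0 = 0)
    (hlam0 : (Real.pi ^ 2 / 2) * W * η ^ (1 - 2 * δ) < lam 0) :
    distToTwoPiZ c < η ^ δ := by
  have hdeficit : lam 0 * (1 - cos c) ≤ W * η := by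
    have := Finset.single_le_sum (fun m _ => mul_nonneg (hlam m) (sub_nonneg.2 (cos_le_one _)))
      (Finset.mem_univ 0) |>.trans (sum_mul_one_sub_cos_le lam x c η W hW hWpos h)
    rwa [hx0, zero_sub, cos_neg] at this
  obtain ⟨hη0, -⟩ := hη
  have hlam0pos : 0 < lam 0 := lt_of_le_of_lt (by positivity) hlam0
  have hsplit : η ^ (1 - 2 * δ) * (η ^ δ) ^ 2 = η := by
    rw [← rpow_natCast, ← rpow_mul hη0.le, ← rpow_add hη0, Nat.cast_ofNat,
      show 1 - 2 * δ + δ * 2 = 1 by ring, rpow_one]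
  have hweighted : lam 0 * distToTwoPiZ c ^ 2 < lam 0 * (η ^ δ) ^ 2 :=
    calc lam 0 * distToTwoPiZ c ^ 2 ≤ lam 0 * (π ^ 2 / 2 * (1 - cos c)) := by
          gcongr; exact sq_distToTwoPiZ_le c
      _ ≤ π ^ 2 / 2 * (W * η) := by rw [mul_left_comm]; gcongr
      _ = π ^ 2 / 2 * W * η ^ (1 - 2 * δ) * (η ^ δ) ^ 2 := by
          rw [mul_assoc _ (η ^ (1 - 2 * δ)), hsplit]; ring
      _ < lam 0 * (η ^ δ) ^ 2 := by gcongr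
  exact lt_of_pow_lt_pow_left₀ 2 (rpow_nonneg hη0.le δ)
    (lt_of_mul_lt_mul_left hweighted hlam0pos.le)

theorem reference_weight_forces_small_offset
    (K : ℕ) (lam : Fin (K + 1) → ℝ) (hlam : ∀ m, 0 ≤ lam m)
    (W : ℝ) (hW : W = ∑ m, lam m) (hWpos : 0 < W)
    (x : Fin (K + 1) → ℝ) (c : ℝ) (η δ : ℝ)
    (hη : η ∈ Set.Ioo (0 : ℝ) 1) (hδ : δ ∈ Set.Ioo (0 : ℝ) (1 / 2))
    (h : 1 - η ≤
      (Complex.exp (-Complex.I * (c : ℂ)) *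
        ((1 / W : ℝ) * ∑ m, (lam m : ℂ) * Complex.exp (Complex.I * (x m : ℂ)))).re)
    (hx0 : x 0 = 0)
    (hlam0 : (Real.pi ^ 2 / 2) * W * η ^ (1 - 2 * δ) < lam 0) :
    distToTwoPiZ c < η ^ δ :=
  reference_weight_forces_small_offset_general K lam hlam W hW hWpos x c η δ hη h hx0 hlam0
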